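/- arXiv:2106.02709 — 7 statements merged into one kernel-verified Lean document; each statement's English description precedes it below -/
import Mathlib

section
/- Demonic composition of binary relations is associative: for all relations R, S, T on a set X, (R*S)*T = R*(S*T). -/
def rcomp {X : Type*} (R S : X → X → Prop) : X → X → Prop :=
  fun x z => ∃ y, R x y ∧ S y z

def rdom {X : Type*} (R : X → X → Prop) : X → X → Prop :=
  fun x y => x = y ∧ ∃ z, R x z

def rran {X : Type*} (R : X → X → Prop) : X → X → Prop :=
  fun x y => x = y ∧ ∃ z, R z y

def dcomp {X : Type*} (R S : X → X → Prop) : X → X → Prop :=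
  fun x z => rcomp R S x z ∧ ∀ y, R x y → rdom S y y

def dref {X : Type*} (R S : X → X → Prop) : Prop :=
  (∀ x y, rdom S x y → rdom R x y) ∧ (∀ x y, rcomp (rdom S) R x y → S x y)

def rconv {X : Type*} (R : X → X → Prop) : X → X → Prop :=
  fun x y => R y x

theorem stmt1 {X : Type*} (R S T : X → X → Prop) :
    dcomp (dcomp R S) T = dcomp R (dcomp S T) := by
  funext x z
  apply propext
  constructor
  · rintro ⟨⟨y, ⟨⟨a, hRa, hSy⟩, hdomS⟩, hT⟩, hall⟩
    have key : ∀ a', R x a' → ∃ w, dcomp S T a' w := by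
      intro a' hRa'
      obtain ⟨_, b, hSb⟩ := hdomS a' hRa'
      obtain ⟨_, w, hTw⟩ := hall b ⟨⟨a', hRa', hSb⟩, hdomS⟩
      exact ⟨w, ⟨b, hSb, hTw⟩, fun b' hSb' =>
        hall b' ⟨⟨a', hRa', hSb'⟩, hdomS⟩⟩
    refine ⟨⟨a, hRa, ⟨⟨y, hSy, hT⟩, ?_⟩⟩, fun a' hRa' => ⟨rfl, key a' hRa'⟩⟩
    intro b hSb
    exact hall b ⟨⟨a, hRa, hSb⟩, hdomS⟩
  · rintro ⟨⟨a, hRa, ⟨⟨y, hSy, hTy⟩, _⟩⟩, hall⟩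
    have hdomS : ∀ a', R x a' → rdom S a' a' := by
      intro a' hRa'
      obtain ⟨_, w, ⟨b, hSb, _⟩, _⟩ := hall a' hRa'
      exact ⟨rfl, b, hSb⟩
    refine ⟨⟨y, ⟨⟨a, hRa, hSy⟩, hdomS⟩, hTy⟩, ?_⟩
    rintro y' ⟨⟨a', hRa', hSa'⟩, _⟩
    obtain ⟨_, w, _, hdomT⟩ := hall a' hRa'
    exact hdomT y' hSa'
end

section
/- The demonic refinement relation ⊑ on binary relations over a set X is a partial order: it is reflexive, transitive, and antisymmetric. -/
theorem stmt5 {X : Type*} :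
    (∀ R : X → X → Prop, dref R R) ∧
    (∀ R S T : X → X → Prop, dref R S → dref S T → dref R T) ∧
    (∀ R S : X → X → Prop, dref R S → dref S R → R = S) := by
  refine ⟨?_, ?_, ?_⟩
  · intro R
    refine ⟨fun x y h => h, ?_⟩
    rintro x y ⟨z, ⟨rfl, _⟩, h⟩
    exact h
  · rintro R S T ⟨h1, h2⟩ ⟨h3, h4⟩
    constructor
    · intro x y h; exact h1 x y (h3 x y h)
    · rintro x y ⟨z, hd, hR⟩
      rcases hd with ⟨rfl, hz⟩
      have hdS : rdom S x x := h3 x x ⟨rfl, hz⟩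
      have hS : S x y := h2 x y ⟨x, hdS, hR⟩
      exact h4 x y ⟨x, ⟨rfl, hz⟩, hS⟩
  · rintro R S ⟨h1, h2⟩ ⟨h3, h4⟩
    funext x y
    apply propext
    constructor
    · intro hR
      exact h2 x y ⟨x, h3 x x ⟨rfl, y, hR⟩, hR⟩
    · intro hS
      exact h4 x y ⟨x, h1 x x ⟨rfl, y, hS⟩, hS⟩
end

section
/- Demonic refinement is left-monotone for demonic composition: for binary relations R, S, T on X, if R ⊑ S then T*R ⊑ T*S. -/
theorem stmt6 {X : Type*} (R S T : X → X → Prop) (h : dref R S) :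
    dref (dcomp T R) (dcomp T S) := by
  obtain ⟨h1, h2⟩ := h
  constructor
  · rintro x y ⟨rfl, z, ⟨⟨u, hTu, hSu⟩, hall⟩⟩
    refine ⟨rfl, ?_⟩
    obtain ⟨-, w, hRw⟩ := h1 u u ⟨rfl, z, hSu⟩
    exact ⟨w, ⟨u, hTu, hRw⟩, fun v hTv => h1 v v (hall v hTv)⟩
  · rintro x y ⟨m, ⟨rfl, z, _, hallS⟩, ⟨u, hTu, hRu⟩, _⟩
    refine ⟨⟨u, hTu, h2 u y ⟨u, hallS u hTu, hRu⟩⟩, hallS⟩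
end

section
/- Demonic refinement is right-monotone for demonic composition: for binary relations R, S, T on X, if R ⊑ S then R*T ⊑ S*T. -/
theorem stmt7 {X : Type*} (R S T : X → X → Prop) (h : dref R S) :
    dref (dcomp R T) (dcomp S T) := by
  obtain ⟨h1, h2⟩ := h
  constructor
  · rintro x y ⟨rfl, z, ⟨⟨w, hSw, hTw⟩, hall⟩⟩
    have hdS : rdom S x x := ⟨rfl, w, hSw⟩
    obtain ⟨-, u, hRu⟩ := h1 x x hdS
    have hRdom : ∀ v, R x v → rdom T v v := fun v hv =>
      hall v (h2 x v ⟨x, hdS, hv⟩)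
    obtain ⟨-, t, hTt⟩ := hRdom u hRu
    exact ⟨rfl, t, ⟨u, hRu, hTt⟩, hRdom⟩
  · rintro x z ⟨m, ⟨rfl, z', ⟨⟨w, hSw, hTw⟩, hallS⟩⟩, ⟨⟨y, hRy, hTy⟩, hallR⟩⟩
    have hdS : rdom S x x := ⟨rfl, w, hSw⟩
    exact ⟨⟨y, h2 x y ⟨x, hdS, hRy⟩, hTy⟩, hallS⟩
end

section
/- The Zareckiĭ map is a faithful representation of an ordered semigroup with identity: let (S, ≤, ;, e) be a monoid with a partial order ≤ such that ; is monotone in both arguments. Define θ mapping a ∈ S to the relation a^θ = {(s,t) ∈ S×S | t ≤ s;a}. Then θ is injective and (a;b)^θ = a^θ ; b^θ (relational composition), and a ≤ b iff a^θ ⊆ b^θ. -/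
theorem stmt12 {S : Type*} [Monoid S] [PartialOrder S]
    (hmono : ∀ s s' t t' : S, s ≤ s' → t ≤ t' → s * t ≤ s' * t') :
    Function.Injective (fun a : S => (fun s t : S => t ≤ s * a)) ∧
    (∀ a b : S, (fun s t : S => t ≤ s * (a * b)) =
      rcomp (fun s t : S => t ≤ s * a) (fun s t : S => t ≤ s * b)) ∧
    (∀ a b : S, a ≤ b ↔ ∀ s t : S, t ≤ s * a → t ≤ s * b) := by
  have key : ∀ a b : S, (∀ s t : S, t ≤ s * a → t ≤ s * b) → a ≤ b := by
    intro a b h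
    have := h 1 a (by simp)
    simpa using this
  refine ⟨?_, ?_, ?_⟩
  · intro a b hab
    have h1 : ∀ s t : S, t ≤ s * a ↔ t ≤ s * b := by
      intro s t; constructor <;> intro h
      · exact (iff_of_eq (congrFun (congrFun hab s) t)).mp h
      · exact (iff_of_eq (congrFun (congrFun hab s) t)).mpr h
    exact le_antisymm (key a b fun s t h => (h1 s t).mp h) (key b a fun s t h => (h1 s t).mpr h)
  · intro a b
    funext s t
    simp only [rcomp, eq_iff_iff]
    constructor
    · intro h
      exact ⟨s * a, le_refl _, by rwa [← mul_assoc] at h⟩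
    · rintro ⟨y, h1, h2⟩
      calc t ≤ y * b := h2
        _ ≤ (s * a) * b := hmono _ _ _ _ h1 le_rfl
        _ = s * (a * b) := mul_assoc ..
  · intro a b
    exact ⟨fun hab s t h => le_trans h (hmono s s a b le_rfl hab), key a b⟩
end

section
/- For binary relations a, b on a set X, if a;b = D(a;b) (i.e., a;b is contained in the identity relation and equals its own domain), then the relation R(a);b is a partial function: if (x,y) ∈ R(a);b and (x,z) ∈ R(a);b then y = z. -/
theorem stmt14 {X : Type*} (a b : X → X → Prop)
    (h : rcomp a b = rdom (rcomp a b)) :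
    ∀ x y z, rcomp (rran a) b x y → rcomp (rran a) b x z → y = z := by
  intro x y z ⟨w, ⟨hw, u, hau⟩, hby⟩ ⟨w', ⟨hw', _⟩, hbz⟩
  subst hw; subst hw'
  have h1 : rcomp a b u y := ⟨x, hau, hby⟩
  have h2 : rcomp a b u z := ⟨x, hau, hbz⟩
  rw [h] at h1 h2
  exact h1.1.symm.trans h2.1
end

section
/- For binary relations a, b on a set X with a;b = D(a;b), the converse of R(a);b is contained in a;D(b): ((R(a);b))^⌣ ⊆ a;D(b), where ^⌣ denotes relational converse. -/
theorem stmt15 {X : Type*} (a b : X → X → Prop)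
    (h : rcomp a b = rdom (rcomp a b)) :
    ∀ x y, rconv (rcomp (rran a) b) x y → rcomp a (rdom b) x y := by
  rintro x y ⟨z, ⟨rfl, w, haw⟩, hb⟩
  have hc : rcomp a b w x := ⟨y, haw, hb⟩
  rw [h] at hc
  obtain ⟨rfl, -⟩ := hc
  exact ⟨_, haw, rfl, _, hb⟩
end
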